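/- For a potential U, distribution D, and m ∈ ℕ, the expected distributional Shapley value of a random point satisfies E_{z ~ D}[ν(z; U, D, m)] = (E_{B ~ D^m}[U(B)] − U(∅)) / m (expected efficiency property). -/

import Mathlib

/-!
Write `I n` for the expected potential of `n` i.i.d. samples from `D`. Splitting a sample of
size `k` into its first point `z` and the remaining `k - 1` points (Fubini), the expected
marginal contribution `E_z E_S[U(S ∪ {z}) − U(S)]` with `|S| = k - 1` is `I k − I (k - 1)`.
Averaging over `k ∈ {1, …, m}` therefore telescopes to `(I m − I 0) / m`, and `I 0 = U(∅)`.
-/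

open MeasureTheory

noncomputable def margContrib {Z : Type*} (U : Multiset Z → ℝ) (z : Z) {n : ℕ}
    (S : Fin n → Z) : ℝ :=
  U (z ::ₘ ↑(List.ofFn S)) - U ↑(List.ofFn S)

/-- Distributional Shapley value:
`ν(z; U, D, m) = E_{k ~ Uniform[m], S ~ D^{k-1}}[U(S ∪ {z}) − U(S)]`. -/
noncomputable def distShapley {Z : Type*} [MeasurableSpace Z] (U : Multiset Z → ℝ)
    (D : Measure Z) (m : ℕ) (z : Z) : ℝ :=
  (1 / m : ℝ) * ∑ k ∈ Finset.Icc 1 m,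
    ∫ S : Fin (k - 1) → Z, margContrib U z S ∂(Measure.pi fun _ => D)

theorem Finset.sum_Icc_one_sub_pred {M : Type*} [AddCommGroup M] (f : ℕ → M) (m : ℕ) :
    ∑ k ∈ Finset.Icc 1 m, (f k - f (k - 1)) = f m - f 0 := by
  induction m with
  | zero => simp
  | succ m ih =>
    rw [Finset.sum_Icc_succ_top (by omega), ih, Nat.add_sub_cancel]
    abel

section ExpectedPotential

variable {Z : Type*} [MeasurableSpace Z] {U : Multiset Z → ℝ} {D : Measure Z}

noncomputable def expectedPotential (U : Multiset Z → ℝ) (D : Measure Z) (n : ℕ) : ℝ :=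
  ∫ B : Fin n → Z, U ↑(List.ofFn B) ∂(Measure.pi fun _ => D)

theorem expectedPotential_zero [IsProbabilityMeasure D] : expectedPotential U D 0 = U 0 := by
  simp [expectedPotential]

theorem cons_ofFn_eq_ofFn_piFinSuccAbove_symm {n : ℕ} (z : Z) (S : Fin n → Z) :
    z ::ₘ (↑(List.ofFn S) : Multiset Z)
      = ↑(List.ofFn ((MeasurableEquiv.piFinSuccAbove (fun _ => Z) 0).symm (z, S))) := by
  simp [List.ofFn_succ]

theorem measurable_cons_ofFn {n : ℕ}
    (hU : Measurable fun B : Fin (n + 1) → Z => U ↑(List.ofFn B)) :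
    Measurable fun p : Z × (Fin n → Z) => U (p.1 ::ₘ ↑(List.ofFn p.2)) := by
  simp_rw [cons_ofFn_eq_ofFn_piFinSuccAbove_symm]
  exact hU.comp (MeasurableEquiv.measurable _)

theorem integral_integral_cons_ofFn [SigmaFinite D] {n : ℕ}
    (hU : Integrable (fun B : Fin (n + 1) → Z => U ↑(List.ofFn B)) (Measure.pi fun _ => D)) :
    ∫ z, ∫ S : Fin n → Z, U (z ::ₘ ↑(List.ofFn S)) ∂(Measure.pi fun _ => D) ∂D
      = expectedPotential U D (n + 1) := by
  have hmp := (measurePreserving_piFinSuccAbove (fun _ : Fin (n + 1) => D) 0).symm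
  simp_rw [cons_ofFn_eq_ofFn_piFinSuccAbove_symm]
  rw [expectedPotential, ← hmp.integral_comp', integral_integral]
  exact (hmp.integrable_comp_emb (MeasurableEquiv.measurableEmbedding _)).2 hU

variable [IsFiniteMeasure D] {C : ℝ}

theorem integrable_ofFn (hC : ∀ S, ‖U S‖ ≤ C) {n : ℕ}
    (hU : Measurable fun B : Fin n → Z => U ↑(List.ofFn B)) :
    Integrable (fun B : Fin n → Z => U ↑(List.ofFn B)) (Measure.pi fun _ => D) :=
  .of_bound hU.aestronglyMeasurable C (ae_of_all _ fun _ => hC _)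

theorem integrable_cons_ofFn (hC : ∀ S, ‖U S‖ ≤ C) {n : ℕ}
    (hU : Measurable fun B : Fin (n + 1) → Z => U ↑(List.ofFn B)) :
    Integrable (fun p : Z × (Fin n → Z) => U (p.1 ::ₘ ↑(List.ofFn p.2)))
      (D.prod (Measure.pi fun _ => D)) :=
  .of_bound (measurable_cons_ofFn hU).aestronglyMeasurable C (ae_of_all _ fun _ => hC _)

theorem integral_margContrib (hC : ∀ S, ‖U S‖ ≤ C)
    (hU : ∀ n : ℕ, Measurable fun B : Fin n → Z => U ↑(List.ofFn B)) (n : ℕ) (z : Z) :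
    ∫ S : Fin n → Z, margContrib U z S ∂(Measure.pi fun _ => D)
      = ∫ S : Fin n → Z, U (z ::ₘ ↑(List.ofFn S)) ∂(Measure.pi fun _ => D)
        - expectedPotential U D n :=
  integral_sub
    (.of_bound
      ((measurable_cons_ofFn (hU (n + 1))).comp measurable_prodMk_left).aestronglyMeasurable
      C (ae_of_all _ fun _ => hC _))
    (integrable_ofFn hC (hU n))

theorem integrable_integral_margContrib (hC : ∀ S, ‖U S‖ ≤ C)
    (hU : ∀ n : ℕ, Measurable fun B : Fin n → Z => U ↑(List.ofFn B)) (n : ℕ) :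
    Integrable (fun z => ∫ S : Fin n → Z, margContrib U z S ∂(Measure.pi fun _ => D)) D := by
  simp_rw [integral_margContrib hC hU]
  exact (integrable_cons_ofFn hC (hU (n + 1))).integral_prod_left.sub (integrable_const _)

theorem integral_integral_margContrib [IsProbabilityMeasure D] (hC : ∀ S, ‖U S‖ ≤ C)
    (hU : ∀ n : ℕ, Measurable fun B : Fin n → Z => U ↑(List.ofFn B)) (n : ℕ) :
    ∫ z, ∫ S : Fin n → Z, margContrib U z S ∂(Measure.pi fun _ => D) ∂D
      = expectedPotential U D (n + 1) - expectedPotential U D n := by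
  simp_rw [integral_margContrib hC hU]
  rw [integral_sub (integrable_cons_ofFn hC (hU (n + 1))).integral_prod_left (integrable_const _),
    integral_integral_cons_ofFn (integrable_ofFn hC (hU (n + 1)))]
  simp

end ExpectedPotential

theorem distShapley_expected_efficiency_general {Z : Type*} [MeasurableSpace Z]
    (U : Multiset Z → ℝ) (hU01 : ∀ S, U S ∈ Set.Icc (0 : ℝ) 1)
    (hUmeas : ∀ n : ℕ, Measurable fun S : Fin n → Z => U ↑(List.ofFn S))
    (D : Measure Z) [IsProbabilityMeasure D] (m : ℕ) :
    ∫ z, distShapley U D m z ∂D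
      = ((∫ B : Fin m → Z, U ↑(List.ofFn B) ∂(Measure.pi fun _ => D))
          - U (0 : Multiset Z)) / m := by
  have hC : ∀ S, ‖U S‖ ≤ 1 := fun S => abs_le.2 ⟨by linarith [(hU01 S).1], (hU01 S).2⟩
  have hstep : ∀ k ∈ Finset.Icc 1 m,
      ∫ z, ∫ S : Fin (k - 1) → Z, margContrib U z S ∂(Measure.pi fun _ => D) ∂D
        = expectedPotential U D k - expectedPotential U D (k - 1) := fun k hk => by
    rw [integral_integral_margContrib hC hUmeas, Nat.sub_add_cancel (Finset.mem_Icc.1 hk).1]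
  simp only [distShapley]
  rw [integral_const_mul,
    integral_finsetSum _ fun k _ => integrable_integral_margContrib hC hUmeas (k - 1),
    Finset.sum_congr rfl hstep, Finset.sum_Icc_one_sub_pred, expectedPotential_zero,
    one_div_mul_eq_div, expectedPotential]

/-- Expected efficiency: the expected distributional Shapley value of a random point
`z ~ D` equals `(E_{B ~ D^m}[U(B)] − U(∅)) / m`. -/
theorem distShapley_expected_efficiency {Z : Type*} [MeasurableSpace Z]
    (U : Multiset Z → ℝ) (hU01 : ∀ S, U S ∈ Set.Icc (0 : ℝ) 1)
    (hUmeas : ∀ n : ℕ, Measurable fun S : Fin n → Z => U ↑(List.ofFn S))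
    (D : Measure Z) [IsProbabilityMeasure D] (m : ℕ) (hm : 1 ≤ m) :
    ∫ z, distShapley U D m z ∂D
      = ((∫ B : Fin m → Z, U ↑(List.ofFn B) ∂(Measure.pi fun _ => D))
          - U (0 : Multiset Z)) / m :=
  distShapley_expected_efficiency_general U hU01 hUmeas D m
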